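/- Let δ ~ N(0,1), s > 0, Δ ∈ ℝ, and let σ(x) = min(max(x + 1/2, 0), 1) be the clipped linear 'sigmoid'. Then E[δ · σ(s(δ + Δ))] = s·(Φ(Δ + 1/(2s)) − Φ(Δ − 1/(2s))), where Φ is the standard normal CDF. -/

import Mathlib

open MeasureTheory ProbabilityTheory

/-- The standard normal CDF `Φ`. -/
noncomputable def stdNormalCDF (t : ℝ) : ℝ := ((gaussianReal 0 1) (Set.Iic t)).toReal

/-!
Gaussian integration by parts: since `x φ(x) = -φ'(x)`, for `g(x) = σ(s(x + Δ))` one gets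
`E[δ g(δ)] = E[g'(δ)]`. The function `g` vanishes left of `a = -Δ - 1/(2s)`, equals `1` right of
`b = -Δ + 1/(2s)` and is affine with slope `s` in between; integrating piecewise, the boundary term
`φ(b)` of the right tail cancels the one of the middle piece, leaving `s ∫_a^b φ`, which is the
claimed difference of values of `Φ` because `φ` is even.
-/

open Real Set Filter Topology Interval

local notation "φ" => ProbabilityTheory.gaussianPDFReal 0 1

noncomputable def clippedSigmoid (x : ℝ) : ℝ := min (max (x + 1 / 2) 0) 1

lemma clippedSigmoid_of_le {x : ℝ} (hx : x ≤ -(1 / 2)) : clippedSigmoid x = 0 := by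
  rw [clippedSigmoid, max_eq_right (by linarith), min_eq_left zero_le_one]

lemma clippedSigmoid_of_ge {x : ℝ} (hx : 1 / 2 ≤ x) : clippedSigmoid x = 1 := by
  rw [clippedSigmoid, max_eq_left (by linarith), min_eq_right (by linarith)]

lemma clippedSigmoid_of_mem_Icc {x : ℝ} (hx : x ∈ Icc (-(1 / 2)) (1 / 2)) :
    clippedSigmoid x = x + 1 / 2 := by
  rw [clippedSigmoid, max_eq_left (by linarith [hx.1]), min_eq_left (by linarith [hx.2])]

lemma abs_clippedSigmoid_le_one (x : ℝ) : |clippedSigmoid x| ≤ 1 :=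
  abs_le.mpr ⟨by unfold clippedSigmoid; linarith [le_min (le_max_right (x + 1 / 2) 0) zero_le_one],
    min_le_right _ _⟩

@[fun_prop]
lemma continuous_clippedSigmoid : Continuous clippedSigmoid := by
  unfold clippedSigmoid
  fun_prop

namespace ProbabilityTheory

lemma gaussianPDFReal_neg (μ : ℝ) (v : NNReal) (x : ℝ) :
    gaussianPDFReal μ v (-x) = gaussianPDFReal (-μ) v x := by
  simp only [gaussianPDFReal]
  ring_nf

lemma hasDerivAt_gaussianPDFReal (μ : ℝ) (v : NNReal) (x : ℝ) :
    HasDerivAt (gaussianPDFReal μ v) (-((x - μ) / v) * gaussianPDFReal μ v x) x := by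
  have hexponent : HasDerivAt (fun y => -(y - μ) ^ 2 / (2 * v)) (-((x - μ) / v)) x := by
    refine ((((hasDerivAt_id x).sub_const μ).pow 2).neg.div_const (2 * (v : ℝ))).congr_deriv ?_
    simp only [id, Nat.cast_ofNat]
    ring
  have h := hexponent.exp.const_mul (√(2 * π * v))⁻¹
  rw [← gaussianPDFReal_def] at h
  exact h.congr_deriv (by rw [gaussianPDFReal]; ring)

@[fun_prop]
lemma continuous_gaussianPDFReal (μ : ℝ) (v : NNReal) : Continuous (gaussianPDFReal μ v) :=
  continuous_iff_continuousAt.mpr fun x => (hasDerivAt_gaussianPDFReal μ v x).continuousAt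

lemma tendsto_gaussianPDFReal_zero_one_atTop : Tendsto φ atTop (𝓝 0) := by
  have hexponent : Tendsto (fun x : ℝ => -(x - 0) ^ 2 / (2 * ((1 : NNReal) : ℝ))) atTop atBot := by
    simp only [sub_zero, NNReal.coe_one, mul_one]
    exact (tendsto_neg_atBot_iff.mpr (tendsto_pow_atTop two_ne_zero)).atBot_div_const two_pos
  have h := (tendsto_exp_atBot.comp hexponent).const_mul (√(2 * π * ((1 : NNReal) : ℝ)))⁻¹
  rwa [mul_zero] at h

lemma integrable_mul_gaussianPDFReal_zero_one : Integrable fun x => x * φ x := by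
  convert (integrable_mul_exp_neg_mul_sq (b := 1 / 2) one_half_pos).const_mul (√(2 * π))⁻¹
    using 2 with x
  simp only [gaussianPDFReal, NNReal.coe_one]
  ring_nf

lemma hasDerivAt_neg_gaussianPDFReal_zero_one (x : ℝ) :
    HasDerivAt (fun y => -φ y) (x * φ x) x :=
  (hasDerivAt_gaussianPDFReal 0 1 x).neg.congr_deriv (by simp)

lemma integral_Ioi_mul_gaussianPDFReal_zero_one (b : ℝ) : ∫ x in Ioi b, x * φ x = φ b := by
  rw [integral_Ioi_of_hasDerivAt_of_tendsto' (fun x _ => hasDerivAt_neg_gaussianPDFReal_zero_one x)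
    integrable_mul_gaussianPDFReal_zero_one.integrableOn
    (by simpa using tendsto_gaussianPDFReal_zero_one_atTop.neg)]
  ring

lemma integral_mul_gaussianPDFReal_zero_one_mul {g g' : ℝ → ℝ} {a b : ℝ}
    (hg : ∀ x ∈ [[a, b]], HasDerivAt g (g' x) x) (hg' : IntervalIntegrable g' volume a b) :
    ∫ x in a..b, x * φ x * g x = φ a * g a - φ b * g b + ∫ x in a..b, φ x * g' x := by
  have hparts := intervalIntegral.integral_deriv_mul_eq_sub
    (fun x _ => hasDerivAt_neg_gaussianPDFReal_zero_one x) hg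
    integrable_mul_gaussianPDFReal_zero_one.intervalIntegrable hg'
  have hcont : ContinuousOn (fun x => x * φ x * g x) [[a, b]] :=
    (by fun_prop : Continuous fun x => x * φ x).continuousOn.mul
      fun x hx => (hg x hx).continuousAt.continuousWithinAt
  have hφg' : IntervalIntegrable (fun x => φ x * g' x) volume a b :=
    hg'.continuousOn_mul (by fun_prop)
  simp only [neg_mul, ← sub_eq_add_neg] at hparts
  rw [intervalIntegral.integral_sub hcont.intervalIntegrable hφg'] at hparts
  linarith

end ProbabilityTheory

lemma stdNormalCDF_eq_integral (t : ℝ) : stdNormalCDF t = ∫ x in Iic t, φ x := by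
  rw [stdNormalCDF, gaussianReal_apply_eq_integral 0 one_ne_zero, ENNReal.toReal_ofReal
    (setIntegral_nonneg measurableSet_Iic fun x _ => gaussianPDFReal_nonneg 0 1 x)]

lemma stdNormalCDF_sub_stdNormalCDF (a b : ℝ) :
    stdNormalCDF b - stdNormalCDF a = ∫ x in -b..-a, φ x := by
  rw [stdNormalCDF_eq_integral, stdNormalCDF_eq_integral, intervalIntegral.integral_Iic_sub_Iic
    (integrable_gaussianPDFReal 0 1).integrableOn (integrable_gaussianPDFReal 0 1).integrableOn,
    ← intervalIntegral.integral_comp_neg]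
  simp only [gaussianPDFReal_neg, neg_zero]

lemma integral_mul_gaussianPDFReal_zero_one_mul_clippedSigmoid {s : ℝ} (hs : 0 < s) (Δ : ℝ) :
    ∫ x, x * φ x * clippedSigmoid (s * (x + Δ))
      = s * ∫ x in (-Δ - 1 / (2 * s))..(-Δ + 1 / (2 * s)), φ x := by
  set a := -Δ - 1 / (2 * s)
  set b := -Δ + 1 / (2 * s)
  have hab : a ≤ b := by simp only [a, b]; linarith [one_div_pos.mpr (mul_pos two_pos hs)]
  have h_a : ∀ x, s * (x + Δ) = s * (x - a) - 1 / 2 := fun x => by simp only [a]; field_simp; ring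
  have h_b : ∀ x, s * (x + Δ) = s * (x - b) + 1 / 2 := fun x => by simp only [b]; field_simp; ring
  have hf : Integrable fun x => x * φ x * clippedSigmoid (s * (x + Δ)) := by
    refine integrable_mul_gaussianPDFReal_zero_one.mono (by fun_prop) (ae_of_all _ fun x => ?_)
    simp only [norm_mul, Real.norm_eq_abs]
    exact mul_le_of_le_one_right (by positivity) (abs_clippedSigmoid_le_one _)
  have hleft : ∫ x in Iic a, x * φ x * clippedSigmoid (s * (x + Δ)) = 0 := by
    refine setIntegral_eq_zero_of_forall_eq_zero fun x (hx : x ≤ a) => ?_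
    rw [clippedSigmoid_of_le (by nlinarith [h_a x]), mul_zero]
  have hright : ∫ x in Ioi b, x * φ x * clippedSigmoid (s * (x + Δ)) = φ b := by
    rw [← integral_Ioi_mul_gaussianPDFReal_zero_one]
    refine setIntegral_congr_fun measurableSet_Ioi fun x (hx : b < x) => ?_
    rw [clippedSigmoid_of_ge (by nlinarith [h_b x]), mul_one]
  have hmiddle : ∫ x in a..b, x * φ x * clippedSigmoid (s * (x + Δ))
      = -φ b + s * ∫ x in a..b, φ x := by
    have hramp : EqOn (fun x => x * φ x * clippedSigmoid (s * (x + Δ)))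
        (fun x => x * φ x * (s * (x + Δ) + 1 / 2)) [[a, b]] := fun x hx => by
      rw [uIcc_of_le hab] at hx
      dsimp only
      rw [clippedSigmoid_of_mem_Icc ⟨by nlinarith [h_a x, hx.1], by nlinarith [h_b x, hx.2]⟩]
    have hderiv (x : ℝ) : HasDerivAt (fun x => s * (x + Δ) + 1 / 2) s x := by
      simpa using ((hasDerivAt_id' x).add_const Δ).const_mul s |>.add_const (1 / 2)
    rw [intervalIntegral.integral_congr hramp, integral_mul_gaussianPDFReal_zero_one_mul
      (fun x _ => hderiv x) intervalIntegrable_const, intervalIntegral.integral_mul_const, h_a a,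
      h_b b]
    ring
  rw [← intervalIntegral.integral_Iic_add_Ioi (b := b) hf.integrableOn hf.integrableOn,
    ← sub_add_cancel (∫ x in Iic b, _) (∫ x in Iic a, x * φ x * clippedSigmoid (s * (x + Δ))),
    intervalIntegral.integral_Iic_sub_Iic hf.integrableOn hf.integrableOn]
  linarith

theorem gaussian_clipped_sigmoid_expectation (s Δ : ℝ) (hs : 0 < s) :
    let σ : ℝ → ℝ := fun x => min (max (x + 1 / 2) 0) 1
    ∫ δ, δ * σ (s * (δ + Δ)) ∂(gaussianReal 0 1) =
      s * (stdNormalCDF (Δ + 1 / (2 * s)) - stdNormalCDF (Δ - 1 / (2 * s))) := by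
  intro σ
  change ∫ δ, δ * clippedSigmoid (s * (δ + Δ)) ∂_ = _
  rw [integral_gaussianReal_eq_integral_smul one_ne_zero, stdNormalCDF_sub_stdNormalCDF]
  convert integral_mul_gaussianPDFReal_zero_one_mul_clippedSigmoid hs Δ using 1
  · congr 1 with x
    rw [smul_eq_mul]
    ring
  · congr 2 <;> ring
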